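/- arXiv:0812.4893 — 3 statements merged into one kernel-verified Lean document; each statement's English description precedes it below -/
import Mathlib

section
/- Let w : E → ℝ_{>0} be weights on the edges of a bipartite graph G = (R ∪ B, E). Let M be a matching and f : R → ℝ_{≥0} a potential function such that for every edge {r,b} ∈ E: either w({r,b}) ≤ f(r), or w({r,b}) ≤ w(e) for some edge e ∈ M incident to r, or w({r,b}) ≤ w(e) for some edge e ∈ M incident to b. Then for any matching M* in G, w(M*) ≤ ∑_{r∈R} f(r) + 2·w(M). -/
/-!
Charge each edge `e = (r, b)` of `M*` to `f r + w_M(r) + w_M(b)`, where `w_M(v)` is the weight of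
the `M`-edges at `v`: by the domination hypothesis and nonnegativity this dominates `w e`. Since
`M*` is a matching, distinct edges of `M*` are charged at distinct red and at distinct blue
vertices, so the total charge is at most `∑ f + ∑_r w_M(r) + ∑_b w_M(b) = ∑ f + 2 w(M)`.
-/

/-- A set of red–blue pairs is a matching: no two of its edges share an endpoint. -/
def IsMatching {R B : Type*} (M : Finset (R × B)) : Prop :=
  ∀ e ∈ M, ∀ f ∈ M, (e.1 = f.1 ∨ e.2 = f.2) → e = f

open Finset

theorem IsMatching.injOn_fst {R B : Type*} {M : Finset (R × B)} (hM : IsMatching M) :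
    Set.InjOn Prod.fst (M : Set (R × B)) :=
  fun _ he _ he' h => hM _ he _ he' (Or.inl h)

theorem IsMatching.injOn_snd {R B : Type*} {M : Finset (R × B)} (hM : IsMatching M) :
    Set.InjOn Prod.snd (M : Set (R × B)) :=
  fun _ he _ he' h => hM _ he _ he' (Or.inr h)

theorem Finset.sum_comp_le_univ_sum_of_injOn {ι κ β : Type*} [Fintype κ] [AddCommMonoid β]
    [PartialOrder β] [IsOrderedAddMonoid β] {s : Finset ι} {k : ι → κ}
    (hk : Set.InjOn k s) {g : κ → β} (hg : ∀ x, 0 ≤ g x) :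
    ∑ i ∈ s, g (k i) ≤ ∑ x, g x := by
  classical
  rw [← sum_image hk]
  exact sum_le_univ_sum_of_nonneg hg

section FiberWeight

variable {ι κ : Type*} [DecidableEq κ] (M : Finset ι) (w : ι → ℝ) (k : ι → κ)

/-- For a matching `M` and an endpoint map `k`, this is the weight of the `M`-edge at `x`, or `0`
if `x` is unmatched. -/
def fiberWeight (x : κ) : ℝ :=
  ∑ e ∈ M with k e = x, w e

variable {M w k}

theorem fiberWeight_nonneg (hw : ∀ e ∈ M, 0 ≤ w e) (x : κ) : 0 ≤ fiberWeight M w k x :=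
  sum_nonneg fun e he => hw e (mem_filter.mp he).1

theorem le_fiberWeight (hw : ∀ e ∈ M, 0 ≤ w e) {e : ι} (he : e ∈ M) :
    w e ≤ fiberWeight M w k (k e) :=
  single_le_sum (fun e' he' => hw e' (mem_filter.mp he').1) (mem_filter.mpr ⟨he, rfl⟩)

variable (M w k)

theorem sum_fiberWeight [Fintype κ] : ∑ x, fiberWeight M w k x = ∑ e ∈ M, w e :=
  sum_fiberwise M k w

end FiberWeight

theorem stmt13_general {R B : Type*} [Fintype R] [Fintype B] (E : Finset (R × B))
    (w : R × B → ℝ) (hw : ∀ e ∈ E, 0 < w e)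
    (M : Finset (R × B)) (hME : M ⊆ E)
    (f : R → ℝ) (hf : ∀ r, 0 ≤ f r)
    (hdom : ∀ e ∈ E, w e ≤ f e.1 ∨
      (∃ e' ∈ M, e'.1 = e.1 ∧ w e ≤ w e') ∨ (∃ e' ∈ M, e'.2 = e.2 ∧ w e ≤ w e'))
    (Mstar : Finset (R × B)) (hMstarE : Mstar ⊆ E) (hMstar : IsMatching Mstar) :
    ∑ e ∈ Mstar, w e ≤ (∑ r, f r) + 2 * ∑ e ∈ M, w e := by
  classical
  have hwM : ∀ e ∈ M, 0 ≤ w e := fun e he => (hw e (hME he)).le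
  set wR := fiberWeight M w Prod.fst
  set wB := fiberWeight M w Prod.snd
  have hwR : ∀ r, 0 ≤ wR r := fiberWeight_nonneg hwM
  have hwB : ∀ b, 0 ≤ wB b := fiberWeight_nonneg hwM
  have hcharge : ∀ e ∈ Mstar, w e ≤ f e.1 + wR e.1 + wB e.2 := by
    intro e he
    rcases hdom e (hMstarE he) with h | ⟨e', he', hr, h⟩ | ⟨e', he', hb, h⟩
    · linarith [hwR e.1, hwB e.2]
    · have := hr ▸ le_fiberWeight (k := Prod.fst) hwM he'
      linarith [hf e.1, hwB e.2]
    · have := hb ▸ le_fiberWeight (k := Prod.snd) hwM he'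
      linarith [hf e.1, hwR e.1]
  calc ∑ e ∈ Mstar, w e
      ≤ ∑ e ∈ Mstar, f e.1 + ∑ e ∈ Mstar, wR e.1 + ∑ e ∈ Mstar, wB e.2 := by
        simpa only [sum_add_distrib] using sum_le_sum hcharge
    _ ≤ ∑ r, f r + ∑ r, wR r + ∑ b, wB b := by
        gcongr
        · exact sum_comp_le_univ_sum_of_injOn hMstar.injOn_fst hf
        · exact sum_comp_le_univ_sum_of_injOn hMstar.injOn_fst hwR
        · exact sum_comp_le_univ_sum_of_injOn hMstar.injOn_snd hwB
    _ = ∑ r, f r + 2 * ∑ e ∈ M, w e := by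
        rw [sum_fiberWeight, sum_fiberWeight]
        ring

/-- in a bipartite graph with edge set `E` and positive weights `w`,
if `M` is a matching and `f : R → ℝ≥0` a potential such that every edge `(r,b)` is
dominated either by `f r`, or by the weight of an `M`-edge at `r`, or by the
weight of an `M`-edge at `b`, then every matching `M*` satisfies
`w(M*) ≤ ∑_r f r + 2·w(M)`. -/
theorem stmt13 {R B : Type*} [Fintype R] [Fintype B] (E : Finset (R × B))
    (w : R × B → ℝ) (hw : ∀ e ∈ E, 0 < w e)
    (M : Finset (R × B)) (hME : M ⊆ E) (hM : IsMatching M)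
    (f : R → ℝ) (hf : ∀ r, 0 ≤ f r)
    (hdom : ∀ e ∈ E, w e ≤ f e.1 ∨
      (∃ e' ∈ M, e'.1 = e.1 ∧ w e ≤ w e') ∨ (∃ e' ∈ M, e'.2 = e.2 ∧ w e ≤ w e'))
    (Mstar : Finset (R × B)) (hMstarE : Mstar ⊆ E) (hMstar : IsMatching Mstar) :
    ∑ e ∈ Mstar, w e ≤ (∑ r, f r) + 2 * ∑ e ∈ M, w e :=
  stmt13_general E w hw M hME f hf hdom Mstar hMstarE hMstar
end

section
/- Let w : E → ℝ_{>0} and suppose a matching M, a set L ⊆ E of 'lost' edges, and for each b ∈ B a value w_B(b) equal to the weight of the M-edge at b (or 0 if b unmatched) satisfy: every lost edge {r,b} ∈ L has w({r,b}) < w_B(b), and each blue node is incident to at most Δ−1 lost edges. Then w(L) ≤ (Δ−1)·∑_{b∈B} w_B(b). -/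
open Finset

theorem Finset.sum_le_mul_sum_of_card_fiber_le {ι κ α : Type*} [Fintype κ] [DecidableEq κ]
    [CommSemiring α] [PartialOrder α] [IsOrderedRing α]
    (s : Finset ι) (f : ι → κ) (w : ι → α) (c : κ → α) (k : ℕ)
    (hc : ∀ j, 0 ≤ c j) (hw : ∀ i ∈ s, w i ≤ c (f i))
    (hcard : ∀ j, #(s.filter (fun i => f i = j)) ≤ k) :
    ∑ i ∈ s, w i ≤ k * ∑ j, c j := by
  rw [← sum_fiberwise s f w, mul_sum]
  refine sum_le_sum fun j _ => ?_
  calc ∑ i ∈ s.filter (fun i => f i = j), w i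
      ≤ #(s.filter (fun i => f i = j)) • c j :=
        sum_le_card_nsmul _ _ _ fun i hi => (mem_filter.mp hi).2 ▸ hw i (mem_filter.mp hi).1
    _ ≤ k * c j := by
        rw [nsmul_eq_mul]
        exact mul_le_mul_of_nonneg_right (Nat.mono_cast (hcard j)) (hc j)

theorem stmt15_general {R B : Type*} [Fintype B] [DecidableEq B]
    (w : R × B → ℝ)
    (Δ : ℕ) (hΔ : 1 ≤ Δ) (L : Finset (R × B))
    (wB : B → ℝ) (hwB0 : ∀ b, 0 ≤ wB b)
    (hlight : ∀ e ∈ L, w e < wB e.2)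
    (hcount : ∀ b : B, (L.filter (fun e => e.2 = b)).card ≤ Δ - 1) :
    ∑ e ∈ L, w e ≤ ((Δ : ℝ) - 1) * ∑ b, wB b := by
  have h := L.sum_le_mul_sum_of_card_fiber_le Prod.snd w wB (Δ - 1) hwB0
    (fun e he => (hlight e he).le) hcount
  rwa [Nat.cast_sub hΔ, Nat.cast_one] at h

/-- Lemma lost-ub: if every lost edge `(r,b) ∈ L` is strictly
lighter than the weight `wB b` of the blue endpoint's matching edge, `wB ≥ 0`,
and each blue node is incident to at most `Δ−1` lost edges, then
`w(L) ≤ (Δ−1)·∑_b wB b`. -/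
theorem stmt15 {R B : Type*} [Fintype R] [Fintype B] [DecidableEq B]
    (E : Finset (R × B)) (w : R × B → ℝ) (hw : ∀ e ∈ E, 0 < w e)
    (Δ : ℕ) (hΔ : 1 ≤ Δ) (L : Finset (R × B)) (hLE : L ⊆ E)
    (wB : B → ℝ) (hwB0 : ∀ b, 0 ≤ wB b)
    (hlight : ∀ e ∈ L, w e < wB e.2)
    (hcount : ∀ b : B, (L.filter (fun e => e.2 = b)).card ≤ Δ - 1) :
    ∑ e ∈ L, w e ≤ ((Δ : ℝ) - 1) * ∑ b, wB b :=
  stmt15_general w Δ hΔ L wB hwB0 hlight hcount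
end

section
/- In a bipartite graph with strict preferences induced by distinct positive edge weights (each node prefers heavier incident edges), the greedy matching (obtained by adding edges in order of decreasing weight when both endpoints are still free) is the unique stable matching. -/
/-- One pass of the greedy algorithm: process the remaining edges in order,
adding an edge to the accumulator `acc` whenever both of its endpoints are
still free. -/
def greedyAux {R B : Type*} [DecidableEq R] [DecidableEq B]
    (acc : List (R × B)) : List (R × B) → List (R × B)
  | [] => acc
  | e :: rest =>
      if acc.any (fun f => f.1 = e.1 || f.2 = e.2) then greedyAux acc rest
      else greedyAux (e :: acc) rest

/-- The greedy matching of an edge list (to be applied to the edges sorted in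
decreasing order of weight). -/
def greedy {R B : Type*} [DecidableEq R] [DecidableEq B]
    (l : List (R × B)) : List (R × B) :=
  greedyAux [] l

/-!
Call a set `M` of edges *dominating* in `E` if every edge of `E` outside `M` shares an endpoint
with a strictly heavier edge of `M`. Processing edges heaviest first, the greedy algorithm only
rejects an edge because of a heavier one it accepted earlier, so its output is a dominating
matching; with distinct weights a matching is stable exactly when it is dominating. Two dominating
matchings `M ≠ N` inside a finite `E` cannot exist: the heaviest edge `e` of `M ∆ N`, say in `M`,
is dominated by some heavier `f ∈ N`, which by maximality also lies in `M`, so `M` has two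
distinct adjacent edges `e` and `f`.
-/

namespace BipartiteMatching

variable {R B : Type*}

def SharesEndpoint (e f : R × B) : Prop :=
  e.1 = f.1 ∨ e.2 = f.2

theorem SharesEndpoint.symm {e f : R × B} (h : SharesEndpoint e f) : SharesEndpoint f e :=
  h.imp Eq.symm Eq.symm

def IsMatching (M : Set (R × B)) : Prop :=
  ∀ e ∈ M, ∀ f ∈ M, SharesEndpoint e f → e = f

def HasNoBlockingEdge (w : R × B → ℝ) (E M : Set (R × B)) : Prop :=
  ∀ e ∈ E, e ∉ M →
    ¬ ((∀ f ∈ M, f.1 = e.1 → w f < w e) ∧ (∀ f ∈ M, f.2 = e.2 → w f < w e))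

def Dominates (w : R × B → ℝ) (E M : Set (R × B)) : Prop :=
  ∀ e ∈ E, e ∉ M → ∃ f ∈ M, SharesEndpoint f e ∧ w e < w f

variable {w : R × B → ℝ} {E M N : Set (R × B)}

theorem Dominates.hasNoBlockingEdge (h : Dominates w E M) : HasNoBlockingEdge w E M := by
  rintro e he heM ⟨h₁, h₂⟩
  obtain ⟨f, hfM, hfe | hfe, hlt⟩ := h e he heM
  · exact (h₁ f hfM hfe).asymm hlt
  · exact (h₂ f hfM hfe).asymm hlt

theorem HasNoBlockingEdge.dominates (hdist : ∀ e ∈ E, ∀ f ∈ E, w e = w f → e = f)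
    (hME : M ⊆ E) (h : HasNoBlockingEdge w E M) : Dominates w E M := by
  intro e he heM
  have hblock := h e he heM
  simp only [not_and_or, not_forall, not_lt] at hblock
  obtain ⟨f, hfM, hfe, hle⟩ : ∃ f ∈ M, SharesEndpoint f e ∧ w e ≤ w f := by
    rcases hblock with ⟨f, hfM, hfe, hle⟩ | ⟨f, hfM, hfe, hle⟩
    exacts [⟨f, hfM, .inl hfe, hle⟩, ⟨f, hfM, .inr hfe, hle⟩]
  refine ⟨f, hfM, hfe, hle.lt_of_ne fun heq => ?_⟩
  exact heM (hdist e he f (hME hfM) heq ▸ hfM)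

theorem IsMatching.insert {M : Set (R × B)} (hM : IsMatching M) {x : R × B}
    (hx : ∀ f ∈ M, ¬ SharesEndpoint f x) : IsMatching (insert x M) := by
  rintro e (rfl | he) f (rfl | hf) hef
  · rfl
  · exact absurd hef.symm (hx f hf)
  · exact absurd hef (hx e he)
  · exact hM e he f hf hef

theorem exists_heavier_mem_sdiff (hM : IsMatching M) (hN : Dominates w E N) (hNE : N ⊆ E)
    {e : R × B} (he : e ∈ E) (heM : e ∈ M) (heN : e ∉ N) :
    ∃ f ∈ E, f ∈ N ∧ f ∉ M ∧ w e < w f := by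
  obtain ⟨f, hfN, hfe, hlt⟩ := hN e he heN
  refine ⟨f, hNE hfN, hfN, fun hfM => hlt.ne ?_, hlt⟩
  rw [hM e heM f hfM hfe.symm]

theorem IsMatching.eq_of_dominates {E : Finset (R × B)} (hM : IsMatching M) (hN : IsMatching N)
    (hME : M ⊆ E) (hNE : N ⊆ E) (hMdom : Dominates w E M) (hNdom : Dominates w E N) :
    M = N := by
  classical
  by_contra hne
  set S := E.filter fun e => ¬ (e ∈ M ↔ e ∈ N)
  have hS : S.Nonempty := by
    obtain ⟨e, he⟩ := not_forall.mp (mt Set.ext hne)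
    rcases em (e ∈ M) with heM | heM
    exacts [⟨e, Finset.mem_filter.mpr ⟨hME heM, he⟩⟩,
      ⟨e, Finset.mem_filter.mpr ⟨hNE (by tauto), he⟩⟩]
  obtain ⟨e, heS, hmax⟩ := S.exists_max_image w hS
  have hfS : ∃ f ∈ S, w e < w f := by
    obtain ⟨he, hxor⟩ := Finset.mem_filter.mp heS
    by_cases heM : e ∈ M
    · obtain ⟨f, hfE, hfN, hfM, hlt⟩ := exists_heavier_mem_sdiff hM hNdom hNE he heM (by tauto)
      exact ⟨f, Finset.mem_filter.mpr ⟨hfE, by tauto⟩, hlt⟩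
    · obtain ⟨f, hfE, hfM, hfN, hlt⟩ := exists_heavier_mem_sdiff hN hMdom hME he (by tauto) heM
      exact ⟨f, Finset.mem_filter.mpr ⟨hfE, by tauto⟩, hlt⟩
  obtain ⟨f, hfS, hlt⟩ := hfS
  exact (hmax f hfS).not_gt hlt

end BipartiteMatching

open BipartiteMatching

section Greedy

variable {R B : Type*} [DecidableEq R] [DecidableEq B]

theorem any_sharesEndpoint_iff {acc : List (R × B)} {e : R × B} :
    acc.any (fun f => f.1 = e.1 || f.2 = e.2) ↔ ∃ f ∈ acc, SharesEndpoint f e := by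
  simp [SharesEndpoint]

theorem mem_greedyAux_of_mem_acc {e : R × B} :
    ∀ {acc l : List (R × B)}, e ∈ acc → e ∈ greedyAux acc l
  | _, [], h => h
  | acc, x :: rest, h => by
    rw [greedyAux]
    split_ifs
    exacts [mem_greedyAux_of_mem_acc h, mem_greedyAux_of_mem_acc (List.mem_cons_of_mem x h)]

theorem mem_of_mem_greedyAux {e : R × B} :
    ∀ {acc l : List (R × B)}, e ∈ greedyAux acc l → e ∈ acc ∨ e ∈ l
  | _, [], h => .inl h
  | acc, x :: rest, h => by
    rw [greedyAux] at h
    split_ifs at h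
    all_goals
      have := mem_of_mem_greedyAux h
      simp only [List.mem_cons] at this ⊢
      tauto

theorem isMatching_greedyAux :
    ∀ {acc : List (R × B)} (l : List (R × B)), IsMatching {e | e ∈ acc} →
      IsMatching {e | e ∈ greedyAux acc l}
  | _, [], h => h
  | acc, x :: rest, h => by
    rw [greedyAux]
    split_ifs with hx
    · exact isMatching_greedyAux rest h
    · refine isMatching_greedyAux rest ?_
      have hx : ∀ f ∈ acc, ¬ SharesEndpoint f x :=
        fun f hf hfx => hx (any_sharesEndpoint_iff.mpr ⟨f, hf, hfx⟩)
      simpa [Set.insert_def] using IsMatching.insert h hx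

theorem dominates_greedyAux (w : R × B → ℝ) :
    ∀ {acc l : List (R × B)}, l.Pairwise (fun a b => w b < w a) →
      (∀ a ∈ acc, ∀ b ∈ l, w b < w a) → Dominates w {e | e ∈ l} {e | e ∈ greedyAux acc l}
  | _, [], _, _ => fun _ he => absurd he List.not_mem_nil
  | acc, x :: rest, hsort, hacc => by
    obtain ⟨hx, hrest⟩ := List.pairwise_cons.mp hsort
    intro e he heG
    simp only [Set.mem_ofPred_eq, greedyAux] at he heG ⊢
    split_ifs at heG ⊢ with hconf
    · rcases List.mem_cons.mp he with rfl | he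
      · obtain ⟨f, hf, hfe⟩ := any_sharesEndpoint_iff.mp hconf
        exact ⟨f, mem_greedyAux_of_mem_acc hf, hfe, hacc f hf e List.mem_cons_self⟩
      · exact dominates_greedyAux w hrest
          (fun a ha b hb => hacc a ha b (List.mem_cons_of_mem x hb)) e he heG
    · rcases List.mem_cons.mp he with rfl | he
      · exact absurd (mem_greedyAux_of_mem_acc List.mem_cons_self) heG
      · refine dominates_greedyAux w hrest ?_ e he heG
        rintro a (_ | ⟨_, ha⟩) b hb
        exacts [hx b hb, hacc a ha b (List.mem_cons_of_mem x hb)]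

theorem mem_of_mem_greedy {l : List (R × B)} {e : R × B} (he : e ∈ greedy l) : e ∈ l :=
  (mem_of_mem_greedyAux he).resolve_left List.not_mem_nil

theorem isMatching_greedy (l : List (R × B)) : IsMatching {e | e ∈ greedy l} :=
  isMatching_greedyAux l fun _ he => absurd he List.not_mem_nil

theorem dominates_greedy {w : R × B → ℝ} {l : List (R × B)}
    (hsort : l.Pairwise (fun a b => w b < w a)) : Dominates w {e | e ∈ l} {e | e ∈ greedy l} :=
  dominates_greedyAux w hsort fun _ ha => absurd ha List.not_mem_nil

end Greedy

theorem stmt18_general {R B : Type*} [DecidableEq R] [DecidableEq B]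
    (E : Finset (R × B)) (w : R × B → ℝ)
    (hdist : ∀ e ∈ E, ∀ f ∈ E, w e = w f → e = f)
    (l : List (R × B)) (hmem : ∀ e, e ∈ l ↔ e ∈ E)
    (hsort : l.Pairwise (fun a b => w b < w a)) :
    -- the greedy matching is stable:
    ((∀ e ∈ greedy l, e ∈ E) ∧
      (∀ e ∈ greedy l, ∀ f ∈ greedy l, (e.1 = f.1 ∨ e.2 = f.2) → e = f) ∧
      (∀ e ∈ E, e ∉ greedy l →
        ¬ ((∀ f ∈ greedy l, f.1 = e.1 → w f < w e) ∧
           (∀ f ∈ greedy l, f.2 = e.2 → w f < w e)))) ∧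
    -- and it is the unique stable matching:
    ∀ M : Finset (R × B), (∀ e ∈ M, e ∈ E) →
      (∀ e ∈ M, ∀ f ∈ M, (e.1 = f.1 ∨ e.2 = f.2) → e = f) →
      (∀ e ∈ E, e ∉ M →
        ¬ ((∀ f ∈ M, f.1 = e.1 → w f < w e) ∧ (∀ f ∈ M, f.2 = e.2 → w f < w e))) →
      ∀ e, e ∈ M ↔ e ∈ greedy l := by
  have hGE : {e | e ∈ greedy l} ⊆ E := fun e he => (hmem e).mp (mem_of_mem_greedy he)
  have hGdom : Dominates w E {e | e ∈ greedy l} :=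
    (Set.ext hmem : {e | e ∈ l} = E) ▸ dominates_greedy hsort
  refine ⟨⟨hGE, isMatching_greedy l, hGdom.hasNoBlockingEdge⟩, fun M hME hM hMstab => ?_⟩
  have hMdom : Dominates w E M := HasNoBlockingEdge.dominates hdist hME hMstab
  exact Set.ext_iff.mp (IsMatching.eq_of_dominates hM (isMatching_greedy l) hME hGE hMdom hGdom)

/-- in a bipartite graph whose strict preferences are induced by
pairwise distinct positive edge weights (heavier = more preferred), the greedy
matching (edges added in decreasing weight order when both endpoints are free)
is the unique stable matching. -/
theorem stmt18 {R B : Type*} [Fintype R] [Fintype B] [DecidableEq R] [DecidableEq B]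
    (E : Finset (R × B)) (w : R × B → ℝ)
    (hw : ∀ e ∈ E, 0 < w e)
    (hdist : ∀ e ∈ E, ∀ f ∈ E, w e = w f → e = f)
    (l : List (R × B)) (hnd : l.Nodup) (hmem : ∀ e, e ∈ l ↔ e ∈ E)
    (hsort : l.Pairwise (fun a b => w b < w a)) :
    -- the greedy matching is stable:
    ((∀ e ∈ greedy l, e ∈ E) ∧
      (∀ e ∈ greedy l, ∀ f ∈ greedy l, (e.1 = f.1 ∨ e.2 = f.2) → e = f) ∧
      (∀ e ∈ E, e ∉ greedy l →
        ¬ ((∀ f ∈ greedy l, f.1 = e.1 → w f < w e) ∧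
           (∀ f ∈ greedy l, f.2 = e.2 → w f < w e)))) ∧
    -- and it is the unique stable matching:
    ∀ M : Finset (R × B), (∀ e ∈ M, e ∈ E) →
      (∀ e ∈ M, ∀ f ∈ M, (e.1 = f.1 ∨ e.2 = f.2) → e = f) →
      (∀ e ∈ E, e ∉ M →
        ¬ ((∀ f ∈ M, f.1 = e.1 → w f < w e) ∧ (∀ f ∈ M, f.2 = e.2 → w f < w e))) →
      ∀ e, e ∈ M ↔ e ∈ greedy l :=
  stmt18_general E w hdist l hmem hsort
end
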